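/- arXiv:math/0606745 — 2 statements merged into one kernel-verified Lean document; each statement's English description precedes it below -/
import Mathlib

section
/- If E ⊆ ℂ is a compact set and φ_λ(z) is holomorphic in λ ∈ Δ (a disc) for each fixed z, injective on E for each fixed λ, and jointly continuous, then for each n ≥ 2 the function λ ↦ log sup { ∏_{1≤i<j≤n} |φ_λ(z_i) − φ_λ(z_j)| : z_1,…,z_n ∈ E } is subharmonic on Δ. -/
open Real Filter

/-- `u` is subharmonic on `U`: upper semicontinuous and satisfying the
sub-mean-value inequality on all sufficiently small circles. -/
def SubharmonicOn (u : ℂ → ℝ) (U : Set ℂ) : Prop :=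
  UpperSemicontinuousOn u U ∧
    ∀ z ∈ U, ∀ᶠ r : ℝ in nhdsWithin (0 : ℝ) (Set.Ioi (0 : ℝ)),
      u z ≤ (1 / (2 * π)) * ∫ θ in (0:ℝ)..(2 * π), u (z + (r : ℂ) * Complex.exp ((θ : ℂ) * Complex.I))

/-!
Near any `λ₀`, pick a tuple `z` maximising the Vandermonde modulus at `λ₀`. Then
`λ ↦ log |V_z(λ)|` is harmonic near `λ₀` (`V_z` is holomorphic and, by injectivity, zero-free),
lies below our function and touches it at `λ₀`; the mean value property of harmonic functions
turns this into the sub-mean-value inequality. Upper semicontinuity comes from continuity of a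
supremum over the compact set `Eⁿ`. If no tuple in `Eⁿ` is injective, every Vandermonde product
vanishes and the function is identically `log 0 = 0`.
-/

open Metric Set Topology InnerProductSpace

theorem IsCompact.continuousOn_sSup {α β γ : Type*} [ConditionallyCompleteLinearOrder α]
    [TopologicalSpace α] [OrderTopology α] [TopologicalSpace β] [TopologicalSpace γ]
    {f : γ → β → α} {U : Set γ} {K : Set β} (hK : IsCompact K)
    (hf : ContinuousOn (fun p : γ × β => f p.1 p.2) (U ×ˢ K)) :
    ContinuousOn (fun x => sSup (f x '' K)) U := by
  rw [continuousOn_iff_continuous_domRestrict]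
  have : CompactSpace K := isCompact_iff_compactSpace.mp hK
  have hf' : Continuous fun p : U × K => f p.1 p.2 :=
    hf.comp_continuous (f := fun p : U × K => (p.1.1, p.2.1)) (by fun_prop)
      fun p => ⟨p.1.2, p.2.2⟩
  convert isCompact_univ.continuous_sSup (f := fun (x : U) (k : K) => f x k) hf' using 2 with x
  rw [Set.domRestrict_apply, image_univ, image_eq_range]

theorem subharmonicOn_iff_circleAverage {u : ℂ → ℝ} {U : Set ℂ} :
    SubharmonicOn u U ↔
      UpperSemicontinuousOn u U ∧ ∀ z ∈ U, ∀ᶠ r in 𝓝[>] 0, u z ≤ circleAverage u z r := by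
  simp only [SubharmonicOn, circleAverage_def, circleMap, one_div, smul_eq_mul]

theorem subharmonicOn_const (a : ℝ) (U : Set ℂ) : SubharmonicOn (fun _ => a) U :=
  subharmonicOn_iff_circleAverage.2 ⟨continuousOn_const.upperSemicontinuousOn,
    fun z _ => .of_forall fun r => (circleAverage_const a z r).ge⟩

theorem subharmonicOn_of_harmonicAt_minorant {u : ℂ → ℝ} {U : Set ℂ} (hU : IsOpen U)
    (hu : ContinuousOn u U)
    (h : ∀ z ∈ U, ∃ v : ℂ → ℝ, HarmonicAt v z ∧ v ≤ᶠ[𝓝 z] u ∧ v z = u z) :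
    SubharmonicOn u U := by
  refine subharmonicOn_iff_circleAverage.2 ⟨hu.upperSemicontinuousOn, fun z hz => ?_⟩
  obtain ⟨v, hvz, hvu, hv⟩ := h z hz
  obtain ⟨ε, hε, hball⟩ := Metric.mem_nhds_iff.1
    (hvz.eventually.and (hvu.and (hU.mem_nhds hz)))
  filter_upwards [Ioo_mem_nhdsGT hε] with r hr
  have hsub : closedBall z |r| ⊆ ball z ε :=
    closedBall_subset_ball (by rw [abs_of_pos hr.1]; exact hr.2)
  have hharm : HarmonicOnNhd v (closedBall z |r|) := fun w hw => (hball (hsub hw)).1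
  calc u z = circleAverage v z r := by rw [hharm.circleAverage_eq, hv]
    _ ≤ circleAverage u z r :=
      circleAverage_mono
        (hharm.continuousOn.mono sphere_subset_closedBall).circleIntegrable'
        (hu.mono fun w hw => (hball (hsub (sphere_subset_closedBall hw))).2.2).circleIntegrable'
        fun w hw => (hball (hsub (sphere_subset_closedBall hw))).2.1

theorem subharmonicOn_log_sSup_norm {ι : Type*} [TopologicalSpace ι] {U : Set ℂ} {K : Set ι}
    (hU : IsOpen U) (hK : IsCompact K) {F : ℂ → ι → ℂ}
    (hF : ContinuousOn (fun p : ℂ × ι => F p.1 p.2) (U ×ˢ K))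
    (hol : ∀ k ∈ K, DifferentiableOn ℂ (F · k) U)
    (hne : ∀ w ∈ U, ∃ k ∈ K, F w k ≠ 0) :
    SubharmonicOn (fun w => Real.log (sSup ((fun k => ‖F w k‖) '' K))) U := by
  have hnorm : ContinuousOn (fun p : ℂ × ι => ‖F p.1 p.2‖) (U ×ˢ K) := hF.norm
  have hslice : ∀ w ∈ U, ContinuousOn (fun k => ‖F w k‖) K := fun w hw =>
    hnorm.comp (f := fun k => (w, k)) (by fun_prop) fun k hk => ⟨hw, hk⟩
  have hbdd : ∀ w ∈ U, BddAbove ((fun k => ‖F w k‖) '' K) := fun w hw =>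
    hK.bddAbove_image (hslice w hw)
  have hle : ∀ w ∈ U, ∀ k ∈ K, ‖F w k‖ ≤ sSup ((fun k => ‖F w k‖) '' K) := fun w hw k hk =>
    le_csSup (hbdd w hw) (mem_image_of_mem _ hk)
  have hpos : ∀ w ∈ U, 0 < sSup ((fun k => ‖F w k‖) '' K) := fun w hw => by
    obtain ⟨k, hk, hFk⟩ := hne w hw
    exact (norm_pos_iff.2 hFk).trans_le (hle w hw k hk)
  refine subharmonicOn_of_harmonicAt_minorant hU
    ((hK.continuousOn_sSup hnorm).log fun w hw => (hpos w hw).ne') fun w hw => ?_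
  obtain ⟨k₀, hk₀, -⟩ := hne w hw
  obtain ⟨k, hk, hmax⟩ := hK.exists_sSup_image_eq ⟨k₀, hk₀⟩ (hslice w hw)
  have hFk : F w k ≠ 0 := norm_ne_zero_iff.1 (hmax ▸ (hpos w hw).ne')
  have hana : AnalyticAt ℂ (F · k) w := (hol k hk).analyticAt (hU.mem_nhds hw)
  refine ⟨fun w' => Real.log ‖F w' k‖, hana.harmonicAt_log_norm hFk, ?_, by rw [hmax]⟩
  filter_upwards [hU.mem_nhds hw, hana.continuousAt.eventually_ne hFk] with w' hw' hFw'
  exact Real.log_le_log (norm_pos_iff.2 hFw') (hle w' hw' k hk)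

def vandermondeProd {R : Type*} [CommRing R] {n : ℕ} (w : Fin n → R) : R :=
  ∏ p ∈ Finset.univ.filter (fun p : Fin n × Fin n => p.1 < p.2), (w p.1 - w p.2)

theorem vandermondeProd_ne_zero_iff {R : Type*} [CommRing R] [IsDomain R] {n : ℕ}
    {w : Fin n → R} : vandermondeProd w ≠ 0 ↔ Function.Injective w := by
  simp only [vandermondeProd, Finset.prod_ne_zero_iff, Finset.mem_filter, Finset.mem_univ,
    true_and, sub_ne_zero, Prod.forall]
  refine ⟨fun h i j hij => ?_, fun hw i j hij => hw.ne hij.ne⟩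
  by_contra hne
  rcases lt_or_gt_of_ne hne with hlt | hlt
  exacts [h i j hlt hij, h j i hlt hij.symm]

theorem continuous_vandermondeProd {R : Type*} [CommRing R] [TopologicalSpace R]
    [IsTopologicalRing R] {n : ℕ} : Continuous (vandermondeProd : (Fin n → R) → R) := by
  unfold vandermondeProd; fun_prop

theorem differentiable_vandermondeProd {𝕜 : Type*} [NontriviallyNormedField 𝕜] {n : ℕ} :
    Differentiable 𝕜 (vandermondeProd : (Fin n → 𝕜) → 𝕜) := by
  unfold vandermondeProd; fun_prop

theorem sSup_norm_vandermondeProd_comp_eq_zero {α 𝕜 : Type*} [NormedField 𝕜] {n : ℕ}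
    {f : α → 𝕜} {K : Set (Fin n → α)} (hK : ∀ z ∈ K, ¬Function.Injective (f ∘ z)) :
    sSup ((fun z => ‖vandermondeProd (f ∘ z)‖) '' K) = 0 := by
  have hzero : (fun z => ‖vandermondeProd (f ∘ z)‖) '' K ⊆ {0} := by
    rintro _ ⟨z, hz, rfl⟩
    simpa using not_not.1 (mt vandermondeProd_ne_zero_iff.1 (hK z hz))
  rcases subset_singleton_iff_eq.1 hzero with h | h <;> simp [h]

theorem continuousOn_comp_tuple {X Y Z ι : Type*} [TopologicalSpace X] [TopologicalSpace Y]
    [TopologicalSpace Z] {φ : X → Y → Z} {U : Set X} {E : Set Y}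
    (hφ : ContinuousOn (fun p : X × Y => φ p.1 p.2) (U ×ˢ E)) :
    ContinuousOn (fun p : X × (ι → Y) => φ p.1 ∘ p.2) (U ×ˢ univ.pi fun _ => E) :=
  continuousOn_pi.2 fun i => hφ.comp (f := fun p : X × (ι → Y) => (p.1, p.2 i)) (by fun_prop)
    fun _ hp => ⟨hp.1, hp.2 i trivial⟩

theorem log_sup_vandermonde_subharmonic_general
    (E : Set ℂ) (hE : IsCompact E)
    (c : ℂ) (R : ℝ)
    (φ : ℂ → ℂ → ℂ)
    (hol : ∀ z ∈ E, DifferentiableOn ℂ (fun lam => φ lam z) (Metric.ball c R))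
    (inj : ∀ lam ∈ Metric.ball c R, Set.InjOn (φ lam) E)
    (cont : ContinuousOn (fun p : ℂ × ℂ => φ p.1 p.2) (Metric.ball c R ×ˢ E))
    (n : ℕ) :
    SubharmonicOn
      (fun lam => Real.log (sSup
        {x : ℝ | ∃ z : Fin n → ℂ, (∀ i, z i ∈ E) ∧
          x = ∏ p ∈ Finset.univ.filter (fun p : Fin n × Fin n => p.1 < p.2),
                ‖φ lam (z p.1) - φ lam (z p.2)‖}))
      (Metric.ball c R) := by
  set K : Set (Fin n → ℂ) := univ.pi fun _ => E
  have hset : ∀ lam, {x : ℝ | ∃ z : Fin n → ℂ, (∀ i, z i ∈ E) ∧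
      x = ∏ p ∈ Finset.univ.filter (fun p : Fin n × Fin n => p.1 < p.2),
        ‖φ lam (z p.1) - φ lam (z p.2)‖} = (fun z => ‖vandermondeProd (φ lam ∘ z)‖) '' K := by
    intro lam
    ext x
    simp [K, vandermondeProd, norm_prod, eq_comm]
  simp only [hset]
  by_cases hK : ∃ z ∈ K, Function.Injective z
  · obtain ⟨z₀, hz₀, hinj₀⟩ := hK
    refine subharmonicOn_log_sSup_norm (F := fun lam z => vandermondeProd (φ lam ∘ z))
      isOpen_ball (isCompact_univ_pi fun _ => hE)
      (continuous_vandermondeProd.comp_continuousOn (continuousOn_comp_tuple cont))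
      (fun z hz => ?_) fun lam hlam => ⟨z₀, hz₀, vandermondeProd_ne_zero_iff.2 ?_⟩
    · exact differentiable_vandermondeProd.comp_differentiableOn (f := fun lam => φ lam ∘ z)
        (differentiableOn_pi.2 fun i => hol (z i) (hz i trivial))
    · exact ((inj lam hlam).injective_iff _ (range_subset_iff.2 fun i => hz₀ i trivial)).2 hinj₀
  · simpa only [sSup_norm_vandermondeProd_comp_eq_zero fun z hz h => hK ⟨z, hz, h.of_comp⟩,
      Real.log_zero] using subharmonicOn_const 0 (ball c R)

theorem log_sup_vandermonde_subharmonic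
    (E : Set ℂ) (hE : IsCompact E) (hEne : E.Nonempty)
    (c : ℂ) (R : ℝ) (hR : 0 < R)
    (φ : ℂ → ℂ → ℂ)
    (hol : ∀ z ∈ E, DifferentiableOn ℂ (fun lam => φ lam z) (Metric.ball c R))
    (inj : ∀ lam ∈ Metric.ball c R, Set.InjOn (φ lam) E)
    (cont : ContinuousOn (fun p : ℂ × ℂ => φ p.1 p.2) (Metric.ball c R ×ˢ E))
    (n : ℕ) (hn : 2 ≤ n) :
    SubharmonicOn
      (fun lam => Real.log (sSup
        {x : ℝ | ∃ z : Fin n → ℂ, (∀ i, z i ∈ E) ∧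
          x = ∏ p ∈ Finset.univ.filter (fun p : Fin n × Fin n => p.1 < p.2),
                ‖φ lam (z p.1) - φ lam (z p.2)‖}))
      (Metric.ball c R) :=
  log_sup_vandermonde_subharmonic_general E hE c R φ hol inj cont n
end

section
/- If f is a nonconstant polynomial and the set {z : |f(z)| ≤ 1} is disconnected, then f has a critical value a (i.e., a = f(w) for some w with f'(w) = 0) with |a| > 1. -/
/-!
Suppose every critical point of `f` has `‖f‖ ≤ 1`, and split `E = {‖f‖ ≤ 1}` into disjoint
compact pieces `A ∋ α` and `B ∋ β`. On the compact region where `‖f‖ ≥ 1 + η` the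
derivative is bounded away from `0`, so a small gradient-descent step
`z ↦ z - t f(z) conj f'(z)` for `½‖f‖²` never increases `‖f‖`, lowers it by a fixed amount
wherever `‖f‖ ≥ 1 + η`, and moves points of `E` by less than the gap between `A` and `B`,
hence maps each piece into itself. Finitely many steps push a disc containing `α` and `β`
into `{‖f‖ ≤ 1 + η}`, which for small `η` lies in disjoint neighbourhoods of `A` and `B`;
the connected image meets both, a contradiction.
-/

open Complex Polynomial Set Metric Filter Topology ComplexConjugate

lemma exists_sublevel_subset_of_isOpen {X : Type*} [TopologicalSpace X] {g : X → ℝ}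
    (hg : Continuous g) (hK : ∀ r, IsCompact {x | g x ≤ r}) {a : ℝ} {U : Set X}
    (hU : IsOpen U) (haU : {x | g x ≤ a} ⊆ U) :
    ∃ η > 0, {x | g x ≤ a + η} ⊆ U := by
  have hanti : Antitone fun n : ℕ => {x | g x ≤ a + 1 / (n + 1)} := fun m n hmn x hx =>
    le_trans (α := ℝ) hx (by gcongr)
  have hlim : Tendsto (fun n : ℕ => a + 1 / ((n : ℝ) + 1)) atTop (𝓝 a) := by
    simpa using tendsto_const_nhds.add (tendsto_one_div_add_atTop_nhds_zero_nat (𝕜 := ℝ))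
  obtain ⟨n, hn⟩ := exists_subset_nhds_of_isCompact' hanti.directed_ge (fun n => hK _)
    (fun n => isClosed_le hg continuous_const) fun x hx =>
      hU.mem_nhds <| haU <| ge_of_tendsto' hlim (mem_iInter.1 hx)
  exact ⟨1 / (n + 1), by positivity, hn⟩

lemma exists_iterate_le_of_forall_le_sub {α : Type*} {g : α → ℝ} {Φ : α → α} {b s μ : ℝ}
    (hμ : 0 < μ) (hmono : ∀ x, g x ≤ s → g (Φ x) ≤ g x)
    (hdec : ∀ x, g x ≤ s → b ≤ g x → g (Φ x) ≤ g x - μ) :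
    ∃ N : ℕ, ∀ x, g x ≤ s → g (Φ^[N] x) ≤ b := by
  have key : ∀ k : ℕ, ∀ x, g x ≤ s → g (Φ^[k] x) ≤ max b (g x - k * μ) := by
    intro k
    induction k with
    | zero => intro x _; simp
    | succ k ih =>
      intro x hx
      rw [Function.iterate_succ_apply]
      refine (ih (Φ x) ((hmono x hx).trans hx)).trans ?_
      have hkμ : 0 ≤ (k : ℝ) * μ := by positivity
      rcases lt_or_ge (g x) b with hlt | hle
      · exact max_le (le_max_left _ _) (le_max_of_le_left (by linarith [hmono x hx]))
      · push_cast
        exact max_le_max le_rfl (by linarith [hdec x hx hle])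
  obtain ⟨N, hN⟩ := exists_nat_gt ((s - b) / μ)
  refine ⟨N, fun x hx => (key N x hx).trans (max_le le_rfl ?_)⟩
  rw [div_lt_iff₀ hμ] at hN
  linarith

lemma mapsTo_of_dist_lt {X : Type*} [PseudoMetricSpace X] {A B E : Set X} {Φ : X → X} {δ : ℝ}
    (hE : E ⊆ A ∪ B) (hAB : ∀ x ∈ A, ∀ y ∈ B, δ ≤ dist x y)
    (hΦ : ∀ x ∈ A, Φ x ∈ E ∧ dist (Φ x) x < δ) : MapsTo Φ A A := fun x hx =>
  (hE (hΦ x hx).1).resolve_right fun hB =>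
    (hΦ x hx).2.not_ge ((hAB x hx _ hB).trans_eq (dist_comm _ _))

theorem isPreconnected_sublevel_of_deformation {X : Type*} [NormedAddCommGroup X]
    [NormedSpace ℝ X] [ProperSpace X] {g : X → ℝ} (hg : Continuous g)
    (hK : ∀ r, IsCompact {x | g x ≤ r}) {a : ℝ}
    (hdeform : ∀ s η δ : ℝ, 0 < η → 0 < δ → ∃ Φ : X → X, Continuous Φ ∧
      (∀ x, g x ≤ a → g (Φ x) ≤ a ∧ dist (Φ x) x < δ) ∧
      ∃ N : ℕ, ∀ x, g x ≤ s → g (Φ^[N] x) ≤ a + η) :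
    IsPreconnected {x | g x ≤ a} := by
  rw [isPreconnected_closed_iff]
  rintro t t' ht ht' hcover ⟨α, hαE, hαt⟩ ⟨β, hβE, hβt'⟩
  by_contra hdisj
  set E := {x | g x ≤ a}
  set A := E ∩ t
  set B := E ∩ t'
  have hA : IsCompact A := (hK a).inter_right ht
  have hB : IsCompact B := (hK a).inter_right ht'
  have hAB : Disjoint A B := by
    rw [Set.disjoint_iff]
    rintro x ⟨⟨hx, h⟩, -, h'⟩
    exact hdisj ⟨x, hx, h, h'⟩
  have hEAB : E ⊆ A ∪ B := fun x hx => (hcover hx).imp (⟨hx, ·⟩) (⟨hx, ·⟩)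
  obtain ⟨U, V, hU, hV, hAU, hBV, hUV⟩ := SeparatedNhds.of_isCompact_isCompact hA hB hAB
  obtain ⟨η, hη, hηUV⟩ := exists_sublevel_subset_of_isOpen hg hK (hU.union hV)
    (hEAB.trans (union_subset_union hAU hBV))
  obtain ⟨δ, hδ, hδA⟩ :=
    hA.exists_thickening_subset_open hB.isClosed.isOpen_compl hAB.subset_compl_right
  have hsep : ∀ x ∈ A, ∀ y ∈ B, δ ≤ dist x y := fun x hx y hy => by
    by_contra! h
    exact hδA (mem_thickening_iff.2 ⟨x, hx, by rwa [dist_comm]⟩) hy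
  obtain ⟨s, hs⟩ := (isCompact_closedBall α (dist β α)).bddAbove_image hg.continuousOn
  obtain ⟨Φ, hΦ, hΦE, N, hN⟩ := hdeform s η δ hη hδ
  have hΦA : MapsTo Φ A A := mapsTo_of_dist_lt hEAB hsep fun x hx => hΦE x hx.1
  have hΦB : MapsTo Φ B B :=
    mapsTo_of_dist_lt (hEAB.trans (union_comm _ _).subset)
      (fun x hx y hy => (hsep y hy x hx).trans_eq (dist_comm _ _)) fun x hx => hΦE x hx.1
  have hconn : IsPreconnected (Φ^[N] '' closedBall α (dist β α)) :=
    (convex_closedBall α _).isPreconnected.image _ (hΦ.iterate N).continuousOn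
  obtain ⟨x, -, hxU, hxV⟩ := hconn U V hU hV
    (by rintro _ ⟨y, hy, rfl⟩; exact hηUV (hN y (hs ⟨y, hy, rfl⟩)))
    ⟨_, mem_image_of_mem _ (mem_closedBall_self dist_nonneg), hAU (hΦA.iterate N ⟨hαE, hαt⟩)⟩
    ⟨_, mem_image_of_mem _ (mem_closedBall.2 le_rfl), hBV (hΦB.iterate N ⟨hβE, hβt'⟩)⟩
  exact hUV.le_bot ⟨hxU, hxV⟩

namespace Polynomial

section NormedField

variable {𝕜 : Type*} [NormedField 𝕜] [ProperSpace 𝕜]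

lemma isCompact_setOf_norm_eval_le (p : 𝕜[X]) (hp : 0 < p.degree) (r : ℝ) :
    IsCompact {z | ‖p.eval z‖ ≤ r} := by
  simpa [Set.preimage, mem_closedBall_zero_iff] using
    (p.isProperMap_eval hp).isCompact_preimage (isCompact_closedBall (0 : 𝕜) r)

lemma exists_norm_eval_le (p : 𝕜[X]) (R : ℝ) :
    ∃ B ≥ 0, ∀ z : 𝕜, ‖z‖ ≤ R → ‖p.eval z‖ ≤ B := by
  obtain ⟨B, hB⟩ :=
    (isCompact_closedBall (0 : 𝕜) R).exists_bound_of_continuousOn p.continuous.continuousOn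
  exact ⟨max B 0, le_max_right _ _, fun z hz =>
    (hB z (mem_closedBall_zero_iff.2 hz)).trans (le_max_left _ _)⟩

lemma exists_norm_eval_add_sub_le (p : 𝕜[X]) (R : ℝ) :
    ∃ C ≥ 0, ∀ z w : 𝕜, ‖z‖ ≤ R → ‖w‖ ≤ 1 →
      ‖p.eval (z + w) - p.eval z - p.derivative.eval z * w‖ ≤ C * ‖w‖ ^ 2 := by
  let q : 𝕜 × 𝕜 → 𝕜 := fun zw =>
    ∑ i ∈ Finset.range p.natDegree, (taylor zw.1 p).coeff (i + 2) * zw.2 ^ i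
  have hq : Continuous q := by
    simp only [q, taylor_coeff]
    fun_prop
  have hexpand : ∀ z w,
      p.eval (z + w) - p.eval z - p.derivative.eval z * w = w ^ 2 * q (z, w) := by
    intro z w
    rw [add_comm, ← taylor_eval, eval_eq_sum_range' (n := p.natDegree + 2)
      (by rw [natDegree_taylor]; omega), Finset.sum_range_succ', Finset.sum_range_succ',
      taylor_coeff_zero, taylor_coeff_one, Finset.mul_sum]
    rw [Finset.sum_congr rfl fun i _ => (by ring : (taylor z p).coeff (i + 1 + 1) * w ^ (i + 1 + 1)
      = w ^ 2 * ((taylor z p).coeff (i + 2) * w ^ i))]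
    ring
  obtain ⟨C, hC⟩ := ((isCompact_closedBall (0 : 𝕜) R).prod
    (isCompact_closedBall (0 : 𝕜) 1)).exists_bound_of_continuousOn hq.continuousOn
  refine ⟨max C 0, le_max_right _ _, fun z w hz hw => ?_⟩
  rw [hexpand, norm_mul, norm_pow, mul_comm]
  gcongr
  exact (hC _ ⟨mem_closedBall_zero_iff.2 hz, mem_closedBall_zero_iff.2 hw⟩).trans
    (le_max_left _ _)

end NormedField

/-- `f z * conj (f' z)` is the gradient of `½ ‖f‖²` at `z`. -/
noncomputable def descentStep (f : ℂ[X]) (t : ℝ) (z : ℂ) : ℂ :=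
  z - t * f.eval z * conj (f.derivative.eval z)

lemma continuous_descentStep (f : ℂ[X]) (t : ℝ) : Continuous (descentStep f t) := by
  unfold descentStep
  fun_prop

lemma dist_descentStep (f : ℂ[X]) (t : ℝ) (z : ℂ) :
    dist (descentStep f t z) z = |t| * ‖f.eval z‖ * ‖f.derivative.eval z‖ := by
  simp [descentStep, mul_assoc]

lemma exists_norm_eval_descentStep_le (f : ℂ[X]) (R : ℝ) :
    ∃ t₀ > 0, ∀ t ∈ Ioc 0 t₀, ∀ z : ℂ, ‖z‖ ≤ R →
      ‖f.eval (descentStep f t z)‖ ≤ ‖f.eval z‖ * (1 - t / 2 * ‖f.derivative.eval z‖ ^ 2) := by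
  obtain ⟨C, hC0, hC⟩ := f.exists_norm_eval_add_sub_le R
  obtain ⟨B₀, hB₀0, hB₀⟩ := f.exists_norm_eval_le R
  obtain ⟨B₁, hB₁0, hB₁⟩ := f.derivative.exists_norm_eval_le R
  refine ⟨1 / (1 + B₀ * B₁ + B₁ ^ 2 + 2 * C * B₀), by positivity, ?_⟩
  rintro t ⟨ht, htD⟩ z hz
  rw [le_div_iff₀ (by positivity)] at htD
  set a := f.eval z
  set b := f.derivative.eval z
  set w := -(t * a * conj b)
  have ha : ‖a‖ ≤ B₀ := hB₀ z hz
  have hb : ‖b‖ ≤ B₁ := hB₁ z hz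
  have hab : t * (‖a‖ * ‖b‖) ≤ t * (B₀ * B₁) :=
    mul_le_mul_of_nonneg_left (mul_le_mul ha hb (norm_nonneg b) hB₀0) ht.le
  have hb2 : t * ‖b‖ ^ 2 ≤ t * B₁ ^ 2 :=
    mul_le_mul_of_nonneg_left (pow_le_pow_left₀ (norm_nonneg b) hb 2) ht.le
  have hCa : C * t * ‖a‖ ≤ C * t * B₀ := mul_le_mul_of_nonneg_left ha (by positivity)
  have hBB : 0 ≤ t * (B₀ * B₁) := by positivity
  have hB₁2 : 0 ≤ t * B₁ ^ 2 := by positivity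
  have hCB : 0 ≤ C * t * B₀ := by positivity
  have hw : ‖w‖ = t * ‖a‖ * ‖b‖ := by simp [w, abs_of_pos ht]
  have hw1 : ‖w‖ ≤ 1 := by rw [hw]; linarith
  have htb : t * ‖b‖ ^ 2 ≤ 1 := by linarith
  have hCta : C * t * ‖a‖ ≤ 1 / 2 := by linarith
  have hlin : a + b * w = a * ((1 - t * ‖b‖ ^ 2 : ℝ) : ℂ) := by
    simp only [w]
    push_cast
    linear_combination (-(t : ℂ) * a) * mul_conj' b
  have hstep : descentStep f t z = z + w := by
    simp only [descentStep, w]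
    ring
  calc ‖f.eval (descentStep f t z)‖
        = ‖(f.eval (z + w) - a - b * w) + (a + b * w)‖ := by rw [hstep]; ring_nf
    _ ≤ C * ‖w‖ ^ 2 + ‖a‖ * (1 - t * ‖b‖ ^ 2) := by
        refine (norm_add_le _ _).trans (add_le_add (hC z w hz hw1) ?_)
        rw [hlin, norm_mul, norm_real, Real.norm_of_nonneg (by linarith)]
    _ ≤ ‖a‖ * (1 - t / 2 * ‖b‖ ^ 2) := by
        rw [hw]
        nlinarith [mul_le_mul_of_nonneg_right hCta
          (by positivity : 0 ≤ t * ‖a‖ * ‖b‖ ^ 2)]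

lemma exists_pos_le_norm_derivative_eval (f : ℂ[X]) (hf : 0 < f.degree) {a b : ℝ}
    (hab : a < b) (hcrit : ∀ w, f.derivative.eval w = 0 → ‖f.eval w‖ ≤ a) (s : ℝ) :
    ∃ c > 0, ∀ z, ‖f.eval z‖ ≤ s → b ≤ ‖f.eval z‖ → c ≤ ‖f.derivative.eval z‖ := by
  have hclosed : IsClosed {z | b ≤ ‖f.eval z‖} :=
    isClosed_le continuous_const f.continuous.norm
  obtain ⟨c, hc, hcf'⟩ := ((f.isCompact_setOf_norm_eval_le hf s).inter_right
    hclosed).exists_forall_le' f.derivative.continuous.norm.continuousOn (a := 0)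
      fun z ⟨_, hbz⟩ => norm_pos_iff.2 fun h => by
        linarith [hcrit z h, show b ≤ ‖f.eval z‖ from hbz]
  exact ⟨c, hc, fun z hs hb => hcf' z ⟨hs, hb⟩⟩

lemma exists_sublevel_deformation (f : ℂ[X]) (hf : 0 < f.degree) {a : ℝ} (ha : 0 ≤ a)
    (hcrit : ∀ w, f.derivative.eval w = 0 → ‖f.eval w‖ ≤ a) (s η δ : ℝ) (hη : 0 < η)
    (hδ : 0 < δ) :
    ∃ Φ : ℂ → ℂ, Continuous Φ ∧
      (∀ z, ‖f.eval z‖ ≤ a → ‖f.eval (Φ z)‖ ≤ a ∧ dist (Φ z) z < δ) ∧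
      ∃ N : ℕ, ∀ z, ‖f.eval z‖ ≤ s → ‖f.eval (Φ^[N] z)‖ ≤ a + η := by
  set s' := max s a
  obtain ⟨R, hR⟩ := (f.isCompact_setOf_norm_eval_le hf s').isBounded.subset_closedBall 0
  have hRs : ∀ z, ‖f.eval z‖ ≤ s' → ‖z‖ ≤ R := fun z hz => mem_closedBall_zero_iff.1 (hR hz)
  obtain ⟨t₀, ht₀, hdesc⟩ := f.exists_norm_eval_descentStep_le R
  obtain ⟨B, hB0, hB⟩ := f.derivative.exists_norm_eval_le R
  obtain ⟨c, hc, hcf'⟩ :=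
    f.exists_pos_le_norm_derivative_eval hf (lt_add_of_pos_right a hη) hcrit s'
  set t := min t₀ (δ / (2 * (a + 1) * (B + 1)))
  have ht : 0 < t := lt_min ht₀ (by positivity)
  have hstep : ∀ z, ‖f.eval z‖ ≤ s' → ‖f.eval (descentStep f t z)‖ ≤
      ‖f.eval z‖ - t / 2 * ‖f.eval z‖ * ‖f.derivative.eval z‖ ^ 2 := fun z hz =>
    (hdesc t ⟨ht, min_le_left _ _⟩ z (hRs z hz)).trans_eq (by ring)
  have hmono : ∀ z, ‖f.eval z‖ ≤ s' → ‖f.eval (descentStep f t z)‖ ≤ ‖f.eval z‖ :=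
    fun z hz => (hstep z hz).trans (sub_le_self _ (by positivity))
  refine ⟨descentStep f t, continuous_descentStep f t, fun z hz => ⟨?_, ?_⟩, ?_⟩
  · exact (hmono z (hz.trans (le_max_right _ _))).trans hz
  · have hz' : ‖f.derivative.eval z‖ ≤ B := hB z (hRs z (hz.trans (le_max_right _ _)))
    have htB : t * ((a + 1) * (B + 1)) ≤ δ / 2 := by
      rw [← le_div_iff₀ (by positivity), div_div, ← mul_assoc]
      exact min_le_right _ _
    rw [dist_descentStep, abs_of_pos ht]
    calc t * ‖f.eval z‖ * ‖f.derivative.eval z‖ ≤ t * ((a + 1) * (B + 1)) := by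
          rw [mul_assoc]
          gcongr <;> linarith
      _ < δ := by linarith
  · obtain ⟨N, hN⟩ := exists_iterate_le_of_forall_le_sub (g := fun z => ‖f.eval z‖)
      (Φ := descentStep f t) (b := a + η) (s := s') (μ := t / 2 * (a + η) * c ^ 2)
      (by positivity) hmono fun z hz hbz => (hstep z hz).trans (by
        gcongr
        exact hcf' z hz hbz)
    exact ⟨N, fun z hz => hN z (hz.trans (le_max_left _ _))⟩

end Polynomial

theorem disconnected_level_set_gives_large_critical_value
    (f : Polynomial ℂ) (hd : 1 ≤ f.natDegree)
    (hdis : ¬ IsPreconnected {z : ℂ | ‖f.eval z‖ ≤ 1}) :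
    ∃ w : ℂ, f.derivative.eval w = 0 ∧ 1 < ‖f.eval w‖ := by
  by_contra! hcrit
  have hf : 0 < f.degree := natDegree_pos_iff_degree_pos.1 hd
  exact hdis <| isPreconnected_sublevel_of_deformation f.continuous.norm
    (f.isCompact_setOf_norm_eval_le hf) fun s η δ hη hδ =>
      f.exists_sublevel_deformation hf zero_le_one hcrit s η δ hη hδ
end
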